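/- Let m > 0 and β = m/(m+3). The function u₂(x,y) = λ₂ x^{β−4} y · F((5−β)/3, (6−β)/3; (2+β)/3; σ), where σ = (−3 y^{(m+3)/3}/(x(m+3)))³ and F is the Gauss hypergeometric function, satisfies y^m u_{xxx} − u_{yyy} = 0 at all points with x > 0, y > 0 and |σ| < 1. -/

import Mathlib

/-- Pochhammer symbol (a)_m = a(a+1)⋯(a+m−1). -/
noncomputable def poch (a : ℝ) (m : ℕ) : ℝ := ∏ i ∈ Finset.range m, (a + i)

/-- The Gauss hypergeometric function F(a,b;c;z). -/
noncomputable def GaussF (a b c z : ℝ) : ℝ :=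
  ∑' k : ℕ, poch a k * poch b k / (poch c k * (Nat.factorial k : ℝ)) * z ^ k

/-- The self-similar variable σ(x,y) = (−3 y^{(m+3)/3}/(x(m+3)))³. -/
noncomputable def sigma3 (m x y : ℝ) : ℝ :=
  (-3 * y ^ ((m + 3) / 3 : ℝ) / (x * (m + 3))) ^ 3

/-- u₂(x,y) = λ₂ x^{β−4} y F((5−β)/3, (6−β)/3; (2+β)/3; σ(x,y)). -/
noncomputable def uThird2 (m β lam x y : ℝ) : ℝ :=
  lam * x ^ (β - 4 : ℝ) * y *
    GaussF ((5 - β) / 3) ((6 - β) / 3) ((2 + β) / 3) (sigma3 m x y)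

/-!
With `D = -27 / (m + 3)^3` one has `σ = D y^(m+3) x^(-3)`, so `u₂` is the generalized power
series `∑ₖ λ cₖ Dᵏ x^(β-4-3k) y^(1+(m+3)k)`, `cₖ` the Gauss coefficients. For `|σ| < 1` it may be
differentiated termwise in `x` and in `y`. Three `x`-derivatives multiply the `k`-th term by
`(β-4-3k)(β-5-3k)(β-6-3k)`, three `y`-derivatives by the falling factorial of `1+(m+3)k`, which
vanishes at `k = 0`. After shifting `k` by one in the `y`-series the two series agree term by term:
when `β = m/(m+3)` the quotient of the two cubic factors is the ratio
`c_{k+1}/c_k = (a+k)(b+k)/((c+k)(k+1))`.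
-/

open Set Filter Topology Polynomial

noncomputable def gaussCoeff (a b c : ℝ) (k : ℕ) : ℝ :=
  poch a k * poch b k / (poch c k * (k.factorial : ℝ))

lemma GaussF_eq_tsum (a b c z : ℝ) : GaussF a b c z = ∑' k, gaussCoeff a b c k * z ^ k := rfl

lemma poch_eq_eval_ascPochhammer (a : ℝ) (k : ℕ) : poch a k = (ascPochhammer ℝ k).eval a := by
  induction k with
  | zero => simp [poch]
  | succ k ih => rw [ascPochhammer_succ_eval, ← ih, poch, Finset.prod_range_succ, poch]

lemma gaussCoeff_eq_ordinaryHypergeometricCoefficient (a b c : ℝ) (k : ℕ) :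
    gaussCoeff a b c k = ordinaryHypergeometricCoefficient a b c k := by
  simp only [gaussCoeff, ordinaryHypergeometricCoefficient, poch_eq_eval_ascPochhammer]
  ring

lemma gaussCoeff_succ_mul {a b c : ℝ} (hc : ∀ n : ℕ, (n : ℝ) ≠ -c) (k : ℕ) :
    gaussCoeff a b c (k + 1) * ((c + k) * (k + 1)) = gaussCoeff a b c k * ((a + k) * (b + k)) := by
  have hpoch : poch c k ≠ 0 :=
    Finset.prod_ne_zero_iff.mpr fun i _ h => hc i (by linarith)
  have hck : c + k ≠ 0 := fun h => hc k (by linarith)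
  simp only [gaussCoeff, poch, Finset.prod_range_succ, Nat.factorial_succ] at hpoch ⊢
  push_cast
  field_simp

def SummableBelow (a : ℕ → ℝ) (R : ℝ) : Prop :=
  ∀ r, 0 ≤ r → r < R → Summable fun k => |a k| * r ^ k

namespace SummableBelow

variable {a : ℕ → ℝ} {R : ℝ}

lemma of_abs_le {b : ℕ → ℝ} (ha : SummableBelow a R) (hba : ∀ k, |b k| ≤ |a k|) :
    SummableBelow b R := fun r hr₀ hr =>
  (ha r hr₀ hr).of_nonneg_of_le (fun _ => by positivity)
    fun k => mul_le_mul_of_nonneg_right (hba k) (by positivity)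

lemma mul_affine (ha : SummableBelow a R) (C d : ℝ) :
    SummableBelow (fun k => a k * (C + d * k)) R := by
  intro r hr₀ hr
  obtain ⟨r', hr', hr'R⟩ := exists_between hr
  have hr'₀ : 0 < r' := hr₀.trans_lt hr'
  -- `k (r / r')^k → 0`: the linear factor is absorbed by the gap between `r` and `r'`
  have hdecay : ∀ᶠ k : ℕ in atTop, (k : ℝ) * (r / r') ^ k ≤ 1 :=
    (tendsto_self_mul_const_pow_of_lt_one (by positivity)
      ((div_lt_one hr'₀).mpr hr')).eventually_le_const one_pos
  refine Summable.of_norm_bounded_eventually ((ha r' hr'₀.le hr'R).mul_left (|C| + |d|)) ?_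
  rw [Nat.cofinite_eq_atTop]
  filter_upwards [hdecay] with k hkr
  have hk : (k : ℝ) * r ^ k ≤ r' ^ k := by
    rwa [div_pow, mul_div_assoc', div_le_one (by positivity)] at hkr
  have hC : |C + d * k| ≤ |C| + |d| * k := by
    simpa [abs_mul] using abs_add_le C (d * k)
  rw [norm_mul, norm_abs_eq_norm, Real.norm_eq_abs, abs_mul, Real.norm_of_nonneg (by positivity)]
  calc |a k| * |C + d * k| * r ^ k ≤ |a k| * (|C| * r ^ k + |d| * (k * r ^ k)) := by
        rw [mul_assoc]
        gcongr
        nlinarith [pow_nonneg hr₀ k]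
    _ ≤ |a k| * (|C| * r' ^ k + |d| * r' ^ k) := by gcongr
    _ = (|C| + |d|) * (|a k| * r' ^ k) := by ring

lemma mul_descPochhammer_eval (ha : SummableBelow a R) (p q : ℝ) (n : ℕ) :
    SummableBelow (fun k => a k * (descPochhammer ℝ n).eval (p + q * k)) R := by
  induction n with
  | zero => simpa using ha
  | succ n ih =>
    refine (ih.mul_affine (p - n) q).of_abs_le fun k => le_of_eq ?_
    rw [descPochhammer_succ_eval]
    ring_nf

lemma const_mul_mul_pow (ha : SummableBelow a R) (K A : ℝ) :
    SummableBelow (fun k => K * (a k * A ^ k)) (R / |A|) := by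
  intro r hr₀ hr
  rcases eq_or_ne A 0 with rfl | hA
  · simp only [abs_zero, div_zero] at hr
    linarith
  have hAr : |A| * r < R := by rwa [lt_div_iff₀ (abs_pos.mpr hA), mul_comm] at hr
  refine ((ha (|A| * r) (by positivity) hAr).mul_left |K|).congr fun k => ?_
  rw [abs_mul, abs_mul, abs_pow, mul_pow]
  ring

end SummableBelow

lemma summableBelow_gaussCoeff {a b c : ℝ}
    (habc : ∀ n : ℕ, (n : ℝ) ≠ -a ∧ (n : ℝ) ≠ -b ∧ (n : ℝ) ≠ -c) :
    SummableBelow (gaussCoeff a b c) 1 := by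
  intro r hr₀ hr
  have hrad : (r.toNNReal : ENNReal) < (ordinaryHypergeometricSeries ℝ a b c).radius := by
    rw [ordinaryHypergeometricSeries_radius_eq_one ℝ a b c habc]
    simpa using hr
  simpa only [ordinaryHypergeometricSeries, FormalMultilinearSeries.ofScalars_norm,
    Real.coe_toNNReal r hr₀, ← gaussCoeff_eq_ordinaryHypergeometricCoefficient,
    Real.norm_eq_abs] using (ordinaryHypergeometricSeries ℝ a b c).summable_norm_mul_pow hrad

noncomputable def rpowSeries (a : ℕ → ℝ) (p q s : ℝ) : ℝ := ∑' k, a k * s ^ (p + q * k)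

lemma Real.rpow_add_mul_natCast {s : ℝ} (hs : 0 < s) (p q : ℝ) (k : ℕ) :
    s ^ (p + q * k) = s ^ p * (s ^ q) ^ k := by
  rw [Real.rpow_add hs, Real.rpow_mul hs.le, Real.rpow_natCast]

lemma Real.rpow_le_max_of_mem_Icc {x₁ x₂ s : ℝ} (e : ℝ) (hx₁ : 0 < x₁) (hs : s ∈ Icc x₁ x₂) :
    s ^ e ≤ max (x₁ ^ e) (x₂ ^ e) := by
  rcases le_or_gt 0 e with he | he
  · exact le_max_of_le_right (Real.rpow_le_rpow (by linarith [hs.1]) hs.2 he)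
  · exact le_max_of_le_left (Real.rpow_le_rpow_of_nonpos hx₁ hs.1 he.le)

lemma rpowSeries_const_mul (K : ℝ) (a : ℕ → ℝ) (p q s : ℝ) :
    rpowSeries (fun k => K * a k) p q s = K * rpowSeries a p q s := by
  simp only [rpowSeries, mul_assoc, tsum_mul_left]

lemma rpowSeries_shift_of_coeff_zero {a : ℕ → ℝ} (ha : a 0 = 0) (p q s : ℝ) :
    rpowSeries a p q s = rpowSeries (fun k => a (k + 1)) (p + q) q s := by
  have hshift : ∀ k : ℕ, a (k + 1) * s ^ (p + q * ↑(k + 1)) = a (k + 1) * s ^ (p + q + q * k) :=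
    fun k => by push_cast; ring_nf
  unfold rpowSeries
  by_cases hsum : Summable fun k => a k * s ^ (p + q * k)
  · rw [hsum.tsum_eq_zero_add, ha, zero_mul, zero_add]
    exact tsum_congr hshift
  · rw [tsum_eq_zero_of_not_summable hsum, tsum_eq_zero_of_not_summable]
    rwa [← summable_nat_add_iff 1, funext hshift] at hsum

lemma rpow_mul_GaussF_eq_rpowSeries (a b c A p q : ℝ) {s : ℝ} (hs : 0 < s) :
    s ^ p * GaussF a b c (A * s ^ q) = rpowSeries (fun k => gaussCoeff a b c k * A ^ k) p q s := by
  rw [GaussF_eq_tsum, rpowSeries, ← tsum_mul_left]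
  refine tsum_congr fun k => ?_
  rw [Real.rpow_add_mul_natCast hs, mul_pow]
  ring

section rpowSeries

variable {a : ℕ → ℝ} {R p q s : ℝ}

lemma isOpen_setOf_pos_rpow_lt (q R : ℝ) : IsOpen {s : ℝ | 0 < s ∧ s ^ q < R} :=
  (continuousOn_id.rpow_const fun _ hs => Or.inl (ne_of_gt hs)).isOpen_inter_preimage
    isOpen_Ioi isOpen_Iio

lemma summable_rpowSeries (ha : SummableBelow a R) (hs : 0 < s) (hsR : s ^ q < R) :
    Summable fun k => a k * s ^ (p + q * k) := by
  refine ((ha (s ^ q) (by positivity) hsR).mul_left (s ^ p)).of_norm_bounded fun k => le_of_eq ?_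
  rw [Real.rpow_add_mul_natCast hs, norm_mul, Real.norm_eq_abs, Real.norm_of_nonneg (by positivity)]
  ring

lemma hasDerivAt_rpowSeries (ha : SummableBelow a R) (hs : 0 < s) (hsR : s ^ q < R) :
    HasDerivAt (rpowSeries a p q) (rpowSeries (fun k => a k * (p + q * k)) (p - 1) q s) s := by
  obtain ⟨ε, hε, hball⟩ := Metric.isOpen_iff.mp (isOpen_setOf_pos_rpow_lt q R) s ⟨hs, hsR⟩
  set x₁ := s - ε / 2 with hx₁_def
  set x₂ := s + ε / 2 with hx₂_def
  have hx₁ : 0 < x₁ ∧ x₁ ^ q < R := hball <| by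
    rw [Metric.mem_ball, Real.dist_eq, abs_lt]; constructor <;> linarith
  have hx₂ : 0 < x₂ ∧ x₂ ^ q < R := hball <| by
    rw [Metric.mem_ball, Real.dist_eq, abs_lt]; constructor <;> linarith
  have hsI : s ∈ Ioo x₁ x₂ := ⟨by linarith, by linarith⟩
  set w := max (x₁ ^ q) (x₂ ^ q)
  set M := max (x₁ ^ (p - 1)) (x₂ ^ (p - 1))
  have hw : 0 ≤ w := le_max_of_le_left (Real.rpow_nonneg hx₁.1.le q)
  have hbound : Summable fun k => M * (|a k * (p + q * k)| * w ^ k) :=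
    ((ha.mul_affine p q) w hw (max_lt hx₁.2 hx₂.2)).mul_left M
  refine hasDerivAt_tsum_of_isPreconnected hbound isOpen_Ioo isPreconnected_Ioo
    (g' := fun k t => a k * (p + q * k) * t ^ (p - 1 + q * k)) (fun k t ht => ?_)
    (fun k t ht => ?_) hsI (summable_rpowSeries ha hs hsR) hsI
  · have ht : t ≠ 0 := (hx₁.1.trans ht.1).ne'
    refine ((Real.hasDerivAt_rpow_const (p := p + q * k) (Or.inl ht)).const_mul
      (a k)).congr_deriv ?_
    rw [sub_add_eq_add_sub]
    ring
  · have ht₀ : 0 < t := hx₁.1.trans ht.1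
    have htI : t ∈ Icc x₁ x₂ := Ioo_subset_Icc_self ht
    rw [Real.rpow_add_mul_natCast ht₀, norm_mul, Real.norm_eq_abs,
      Real.norm_of_nonneg (by positivity), mul_left_comm]
    gcongr
    · exact Real.rpow_le_max_of_mem_Icc _ hx₁.1 htI
    · exact Real.rpow_le_max_of_mem_Icc _ hx₁.1 htI

lemma iteratedDeriv_rpowSeries (ha : SummableBelow a R) (n : ℕ) (hs : 0 < s) (hsR : s ^ q < R) :
    iteratedDeriv n (rpowSeries a p q) s =
      rpowSeries (fun k => a k * (descPochhammer ℝ n).eval (p + q * k)) (p - n) q s := by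
  induction n generalizing s with
  | zero => simp
  | succ n ih =>
    have hnear : iteratedDeriv n (rpowSeries a p q) =ᶠ[𝓝 s]
        rpowSeries (fun k => a k * (descPochhammer ℝ n).eval (p + q * k)) (p - n) q :=
      eventually_of_mem ((isOpen_setOf_pos_rpow_lt q R).mem_nhds ⟨hs, hsR⟩) fun t ht => ih ht.1 ht.2
    rw [iteratedDeriv_succ, hnear.deriv_eq,
      (hasDerivAt_rpowSeries (ha.mul_descPochhammer_eval p q n) hs hsR).deriv]
    congr 1
    · ext k
      rw [descPochhammer_succ_eval]
      ring
    · push_cast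
      ring

end rpowSeries

noncomputable def sigma3Const (m : ℝ) : ℝ := -27 / (m + 3) ^ 3

noncomputable def uThird2Coeff (β : ℝ) : ℕ → ℝ :=
  gaussCoeff ((5 - β) / 3) ((6 - β) / 3) ((2 + β) / 3)

lemma sigma3_eq (m x : ℝ) {y : ℝ} (hy : 0 ≤ y) :
    sigma3 m x y = sigma3Const m * y ^ (m + 3) * x ^ (-3 : ℝ) := by
  have hy3 : (y ^ ((m + 3) / 3)) ^ 3 = y ^ (m + 3) := by
    rw [← Real.rpow_natCast, ← Real.rpow_mul hy]
    norm_num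
  have hx3 : x ^ (-3 : ℝ) = (x ^ 3)⁻¹ := by
    exact_mod_cast Real.rpow_intCast x (-3)
  rw [sigma3, sigma3Const, div_pow, mul_pow, mul_pow, hy3, hx3, div_eq_mul_inv, mul_inv]
  ring

lemma uThird2Coeff_mul_descPochhammer {m β : ℝ} (hm : m + 3 ≠ 0) (hβ : β = m / (m + 3))
    (hc : ∀ n : ℕ, (n : ℝ) ≠ -((2 + β) / 3)) (k : ℕ) :
    uThird2Coeff β k * (descPochhammer ℝ 3).eval (β - 4 + -3 * k) =
      sigma3Const m * uThird2Coeff β (k + 1) *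
        (descPochhammer ℝ 3).eval (1 + (m + 3) * ↑(k + 1)) := by
  have hrec := gaussCoeff_succ_mul (a := (5 - β) / 3) (b := (6 - β) / 3) hc k
  have hβ₁ : 1 - β ≠ 0 := by
    rw [hβ, one_sub_div hm]
    simpa using hm
  have hm' : m = 3 / (1 - β) - 3 := by
    rw [eq_sub_iff_add_eq, eq_div_iff hβ₁, hβ]
    field_simp
    ring
  simp only [uThird2Coeff, sigma3Const, descPochhammer_succ_eval, descPochhammer_zero, eval_one]
  generalize gaussCoeff ((5 - β) / 3) ((6 - β) / 3) ((2 + β) / 3) k = c₀ at hrec ⊢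
  generalize gaussCoeff ((5 - β) / 3) ((6 - β) / 3) ((2 + β) / 3) (k + 1) = c₁ at hrec ⊢
  subst hm'
  field_simp
  push_cast
  -- both cubic factors contain `4 - β + 3k`; what is left is the Gauss recursion
  linear_combination (243 * (4 - β + 3 * k)) * hrec

lemma uThird2_eqOn_rpowSeries_left (m β lam : ℝ) {y : ℝ} (hy : 0 ≤ y) :
    EqOn (fun s => uThird2 m β lam s y)
      (rpowSeries (fun k => lam * y * (uThird2Coeff β k * (sigma3Const m * y ^ (m + 3)) ^ k))
        (β - 4) (-3)) (Ioi 0) := fun s hs => by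
  have h := rpow_mul_GaussF_eq_rpowSeries ((5 - β) / 3) ((6 - β) / 3) ((2 + β) / 3)
    (sigma3Const m * y ^ (m + 3)) (β - 4) (-3) hs
  rw [rpowSeries_const_mul, uThird2Coeff, ← h]
  simp only [uThird2, sigma3_eq m s hy]
  ring

lemma uThird2_eqOn_rpowSeries_right (m β lam x : ℝ) :
    EqOn (fun s => uThird2 m β lam x s)
      (rpowSeries
        (fun k => lam * x ^ (β - 4) * (uThird2Coeff β k * (sigma3Const m * x ^ (-3 : ℝ)) ^ k))
        1 (m + 3)) (Ioi 0) := fun s hs => by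
  have h := rpow_mul_GaussF_eq_rpowSeries ((5 - β) / 3) ((6 - β) / 3) ((2 + β) / 3)
    (sigma3Const m * x ^ (-3 : ℝ)) 1 (m + 3) hs
  rw [rpowSeries_const_mul, uThird2Coeff, ← h]
  simp only [uThird2, sigma3_eq m x (le_of_lt hs), Real.rpow_one, mul_right_comm (sigma3Const m)]
  ring

lemma uThird2_params_ne_neg_nat {m β : ℝ} (hm : 0 < m) (hβ : β = m / (m + 3)) (n : ℕ) :
    (n : ℝ) ≠ -((5 - β) / 3) ∧ (n : ℝ) ≠ -((6 - β) / 3) ∧ (n : ℝ) ≠ -((2 + β) / 3) := by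
  have hβ₀ : 0 < β := hβ ▸ by positivity
  have hβ₁ : β < 1 := hβ ▸ (div_lt_one (by positivity)).mpr (by linarith)
  have hn := n.cast_nonneg (α := ℝ)
  refine ⟨?_, ?_, ?_⟩ <;> intro h <;> linarith

lemma rpow_lt_of_abs_sigma3_lt_one {m x y : ℝ} (hm : m + 3 ≠ 0) (hx : 0 < x) (hy : 0 < y)
    (hσ : |sigma3 m x y| < 1) :
    x ^ (-3 : ℝ) < 1 / |sigma3Const m * y ^ (m + 3)| ∧
      y ^ (m + 3) < 1 / |sigma3Const m * x ^ (-3 : ℝ)| := by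
  have hD : sigma3Const m ≠ 0 := div_ne_zero (by norm_num) (pow_ne_zero 3 hm)
  have hx₃ : 0 < x ^ (-3 : ℝ) := by positivity
  have hy₃ : 0 < y ^ (m + 3) := by positivity
  rw [sigma3_eq m x hy.le, abs_mul, abs_mul, abs_of_pos hx₃, abs_of_pos hy₃] at hσ
  rw [lt_div_iff₀ (abs_pos.mpr (mul_ne_zero hD hy₃.ne')),
    lt_div_iff₀ (abs_pos.mpr (mul_ne_zero hD hx₃.ne')), abs_mul, abs_mul, abs_of_pos hx₃,
    abs_of_pos hy₃]
  constructor <;> linarith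

lemma uThird2_series_term_eq {m β : ℝ} (lam : ℝ) {x y : ℝ} (hm : m + 3 ≠ 0) (hβ : β = m / (m + 3))
    (hc : ∀ n : ℕ, (n : ℝ) ≠ -((2 + β) / 3)) (hx : 0 < x) (hy : 0 < y) (k : ℕ) :
    y ^ m * (lam * y * (uThird2Coeff β k * (sigma3Const m * y ^ (m + 3)) ^ k) *
        (descPochhammer ℝ 3).eval (β - 4 + -3 * k) * x ^ (β - 4 - ((3 : ℕ) : ℝ) + -3 * k)) =
      lam * x ^ (β - 4) * (uThird2Coeff β (k + 1) * (sigma3Const m * x ^ (-3 : ℝ)) ^ (k + 1)) *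
        (descPochhammer ℝ 3).eval (1 + (m + 3) * ↑(k + 1)) *
        y ^ (1 - ((3 : ℕ) : ℝ) + (m + 3) + (m + 3) * k) := by
  have hx_exp : x ^ (β - 4 - ((3 : ℕ) : ℝ) + -3 * k) =
      x ^ (β - 4) * x ^ (-3 : ℝ) * (x ^ (-3 : ℝ)) ^ k := by
    rw [← Real.rpow_add hx, ← Real.rpow_add_mul_natCast hx]
    norm_num [sub_eq_add_neg]
  have hy_exp : y ^ (1 - ((3 : ℕ) : ℝ) + (m + 3) + (m + 3) * k) =
      y ^ m * y * (y ^ (m + 3)) ^ k := by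
    rw [← Real.rpow_add_one hy.ne', ← Real.rpow_add_mul_natCast hy]
    congr 1
    push_cast
    ring
  rw [hx_exp, hy_exp]
  linear_combination (lam * y ^ m * y * sigma3Const m ^ k * (y ^ (m + 3)) ^ k * x ^ (β - 4) *
    x ^ (-3 : ℝ) * (x ^ (-3 : ℝ)) ^ k) * uThird2Coeff_mul_descPochhammer hm hβ hc k

theorem uThird2_solves (m β lam : ℝ) (hm : 0 < m) (hβ : β = m / (m + 3)) :
    ∀ x y : ℝ, 0 < x → 0 < y → |sigma3 m x y| < 1 →
      y ^ m * iteratedDeriv 3 (fun s => uThird2 m β lam s y) x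
        - iteratedDeriv 3 (fun s => uThird2 m β lam x s) y = 0 := by
  intro x y hx hy hσ
  have hm₃ : m + 3 ≠ 0 := by positivity
  have habc := uThird2_params_ne_neg_nat hm hβ
  obtain ⟨hxR, hyR⟩ := rpow_lt_of_abs_sigma3_lt_one hm₃ hx hy hσ
  have hcoeff : SummableBelow (uThird2Coeff β) 1 := summableBelow_gaussCoeff habc
  rw [(uThird2_eqOn_rpowSeries_left m β lam hy.le).iteratedDeriv_of_isOpen isOpen_Ioi 3 hx,
    (uThird2_eqOn_rpowSeries_right m β lam x).iteratedDeriv_of_isOpen isOpen_Ioi 3 hy,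
    iteratedDeriv_rpowSeries (hcoeff.const_mul_mul_pow _ _) 3 hy hyR,
    rpowSeries_shift_of_coeff_zero (by simp [descPochhammer_succ_eval]),
    iteratedDeriv_rpowSeries (hcoeff.const_mul_mul_pow _ _) 3 hx hxR,
    sub_eq_zero, rpowSeries, rpowSeries, ← tsum_mul_left]
  exact tsum_congr fun k => uThird2_series_term_eq lam hm₃ hβ (fun n => (habc n).2.2) hx hy k
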